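/- Solo detection: In any execution of the basic replication algorithm of Mu, if a process p performs a successful write to a process q (either the prepare-phase write of p's proposal number to q's minProposal, or the accept-phase write of a value to a slot of q's log), then no other process r ≠ p wrote to q at any time between the moment p added q to its confirmed-followers set and the moment of p's write. -/

import Mathlib

/-- An abstract execution of the basic replication algorithm of Mu, over `n`
processes, viewed through its permission-management events.  Time is discrete.
Only *successful* writes are recorded; a write succeeds only if the writer
holds write permission on the target replica at the time of the write. -/
structure MuExec (n : ℕ) where
  /-- `hasPerm t x q`: at time `t`, process `x` holds write permission on
  process `q`'s log (and minProposal). -/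
  hasPerm : ℕ → Fin n → Fin n → Prop
  /-- `granted t x q`: at time `t`, replica `q` grants write permission to `x`,
  in response to a permission request by `x`. -/
  granted : ℕ → Fin n → Fin n → Prop
  /-- `writesTo t x q`: at time `t`, process `x` performs a successful write to
  `q` (either the prepare-phase write of `x`'s proposal number to `q`'s
  minProposal, or an accept-phase write of a value to a slot of `q`'s log). -/
  writesTo : ℕ → Fin n → Fin n → Prop
  /-- `addsConfirmed t x q`: at time `t`, leader `x` adds `q` to its
  confirmed-followers set; this happens exactly when `x` is granted exclusive
  write permission on `q` in response to the permission request issued at the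
  start of `x`'s current tenure. -/
  addsConfirmed : ℕ → Fin n → Fin n → Prop
  /-- each replica grants write permission to at most one process at a time -/
  perm_excl : ∀ t q x y, hasPerm t x q → hasPerm t y q → x = y
  /-- a successful write requires write permission at the time of the write -/
  write_perm : ∀ t x q, writesTo t x q → hasPerm t x q
  /-- write permission can only be (re)gained through a grant: a process cannot
  lose permission and regain it without being granted it anew -/
  perm_gain : ∀ t x q, hasPerm (t + 1) x q → hasPerm t x q ∨ granted (t + 1) x q
  /-- adding `q` to the confirmed-followers set comes with write permission -/
  confirm_perm : ∀ t x q, addsConfirmed t x q → hasPerm t x q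

/-! Permission that `p` holds at the time of its write can only have been gained through a grant,
and there is none after `t0`; so `p` holds permission on `q` throughout `[t0, t2]`. Permission on
`q` being exclusive, no `r ≠ p` can hold it, let alone write to `q`, in that interval. -/

namespace MuExec

variable {n : ℕ} (E : MuExec n)

theorem hasPerm_of_le_of_forall_not_granted {x q : Fin n} {s t : ℕ} (hst : s ≤ t)
    (hperm : E.hasPerm t x q) (hgrant : ∀ u, s < u → u ≤ t → ¬ E.granted u x q) :
    E.hasPerm s x q := by
  induction t, hst using Nat.le_induction with
  | base => exact hperm
  | succ t hst ih =>
    refine ih ?_ fun u hsu hut => hgrant u hsu (by omega)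
    exact (E.perm_gain t x q hperm).resolve_right (hgrant (t + 1) (by omega) le_rfl)

theorem eq_of_writesTo_of_hasPerm {x y q : Fin n} {t : ℕ} (hw : E.writesTo t x q)
    (hperm : E.hasPerm t y q) : x = y :=
  E.perm_excl t q x y (E.write_perm t x q hw) hperm

end MuExec

theorem solo_detection_general {n : ℕ} (E : MuExec n)
    (p q r : Fin n) (t0 t1 t2 : ℕ)
    (hnoregrant : ∀ t, t0 < t → t ≤ t2 → ¬ E.granted t p q)
    (hw : E.writesTo t2 p q)
    (hr : r ≠ p)
    (h01 : t0 ≤ t1) (h12 : t1 ≤ t2) :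
    ¬ E.writesTo t1 r q := by
  intro hwr
  have hperm : E.hasPerm t1 p q :=
    E.hasPerm_of_le_of_forall_not_granted h12 (E.write_perm t2 p q hw)
      fun t ht1 ht2 => hnoregrant t (by omega) ht2
  exact hr (E.eq_of_writesTo_of_hasPerm hwr hperm)

/-- **Solo detection.** In any execution of the basic replication algorithm of
Mu, if a process `p` performs a successful write to a process `q` at time `t2`
(prepare-phase write to `q`'s minProposal or accept-phase write to a slot of
`q`'s log), having added `q` to its confirmed-followers set at time `t0 ≤ t2`,
then no other process `r ≠ p` wrote to `q` at any time `t1` between the moment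
`p` added `q` to its confirmed-followers set and the moment of `p`'s write.

The hypothesis `hnoregrant` records that permission is granted at most once
per permission request and that `p` issues no further permission requests to
`q` while `q` remains in its confirmed-followers set: hence `q` grants `p` no
new permission between `t0` and `t2`. -/
theorem solo_detection {n : ℕ} (E : MuExec n)
    (p q r : Fin n) (t0 t1 t2 : ℕ)
    (hadd : E.addsConfirmed t0 p q)
    (hnoregrant : ∀ t, t0 < t → t ≤ t2 → ¬ E.granted t p q)
    (hw : E.writesTo t2 p q)
    (h02 : t0 ≤ t2)
    (hr : r ≠ p)
    (h01 : t0 ≤ t1) (h12 : t1 ≤ t2) :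
    ¬ E.writesTo t1 r q :=
  solo_detection_general E p q r t0 t1 t2 hnoregrant hw hr h01 h12
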